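/- Let Ω ⊆ ℝ^M be a nonempty bounded open set with Lebesgue measure, K ⊆ ℝ^N a nonempty closed convex set, and φ : [0,1] × Ω × K → (nonempty subsets of ℝ^N) an upper semicontinuous set-valued map with convex compact values such that there exist α ∈ L²(Ω, ℝ) and c > 0 with |v| ≤ α(x) + c|y| for every t, x, y and v ∈ φ(t,x,y). Assume moreover that φ is tangent to K: φ(t,x,y) ∩ T_K(y) ≠ ∅ for all t ∈ [0,1], x ∈ Ω, y ∈ K, where T_K(y) := closure(⋃_{h>0} {h⁻¹ • (k − y) : k ∈ K}). Then for every t ∈ [0,1] and every u ∈ L²(Ω, ℝ^N) with u(x) ∈ K for a.e. x ∈ Ω, there exists a measurable, square-integrable function v : Ω → ℝ^N such that v(x) ∈ φ(t, x, u(x)) ∩ T_K(u(x)) for a.e. x ∈ Ω. -/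

import Mathlib

/-!
At fixed `t`, replace `u` by a measurable representative. On the measurable set where
`x ∈ Ω` and `u x ∈ K`, the values `S x = φ t x (u x) ∩ T_K(u x)` are nonempty and compact.
Upper semicontinuity of `φ` makes `x ↦ infEDist p (φ t x (u x))` lower semicontinuous, hence
measurable, and `T_K(y)` is the closure of a continuous image of the separable set `(0,∞) × K`,
so `y ↦ infEDist p (T_K(y))` is a countable infimum of continuous functions. Since
`φ t x (u x)` is compact, whether `S x` meets a closed ball can be tested on a countable dense
set, so these hitting sets are measurable. The Kuratowski–Ryll-Nardzewski theorem then gives a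
measurable selection, and the growth bound `‖v‖ ≤ α + c ‖u‖` puts it in `L²`.
-/

open MeasureTheory Metric Set Filter Topology TopologicalSpace
open scoped ENNReal

section MeasurableSelection

variable {X E : Type*} [MeasurableSpace X]

theorem exists_measurable_nat_forall_of_measurableSet {P : X → ℕ → Prop}
    (hP : ∀ x, ∃ m, P x m) (hPm : ∀ m, MeasurableSet {x | P x m}) :
    ∃ n : X → ℕ, Measurable n ∧ ∀ x, P x (n x) := by
  classical
  exact ⟨fun x => Nat.find (hP x), measurable_find hP hPm, fun x => Nat.find_spec (hP x)⟩

variable [MetricSpace E] [SeparableSpace E] [Nonempty E] [MeasurableSpace E]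
  {S : X → Set E}

theorem exists_measurable_closedBall_inter_nonempty
    (hS : ∀ q r, 0 < r → MeasurableSet {x | (S x ∩ closedBall q r).Nonempty})
    (hne : ∀ x, (S x).Nonempty) {r : ℝ} (hr : 0 < r) :
    ∃ g : X → E, Measurable g ∧ ∀ x, (S x ∩ closedBall (g x) r).Nonempty := by
  obtain ⟨e, he⟩ := exists_dense_seq E
  have hex : ∀ x, ∃ m, (S x ∩ closedBall (e m) r).Nonempty := fun x => by
    obtain ⟨s, hs⟩ := hne x
    obtain ⟨m, hm⟩ := he.exists_dist_lt s hr
    exact ⟨m, s, hs, hm.le⟩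
  obtain ⟨n, hn, hnS⟩ := exists_measurable_nat_forall_of_measurableSet hex (fun m => hS _ _ hr)
  exact ⟨e ∘ n, measurable_from_nat.comp hn, hnS⟩

theorem exists_measurable_closedBall_inter_nonempty_of_dist_le [OpensMeasurableSpace E]
    (hS : ∀ q r, 0 < r → MeasurableSet {x | (S x ∩ closedBall q r).Nonempty})
    {g : X → E} (hg : Measurable g) {ρ r : ℝ} (hgS : ∀ x, (S x ∩ closedBall (g x) ρ).Nonempty)
    (hr : 0 < r) :
    ∃ g' : X → E, Measurable g' ∧ (∀ x, (S x ∩ closedBall (g' x) r).Nonempty) ∧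
      ∀ x, dist (g' x) (g x) ≤ ρ + r := by
  obtain ⟨e, he⟩ := exists_dense_seq E
  have hex : ∀ x, ∃ m, (S x ∩ closedBall (e m) r).Nonempty ∧ dist (e m) (g x) ≤ ρ + r :=
    fun x => by
      obtain ⟨s, hs, hsg⟩ := hgS x
      obtain ⟨m, hm⟩ := he.exists_dist_lt s hr
      refine ⟨m, ⟨s, hs, hm.le⟩, ?_⟩
      calc dist (e m) (g x) ≤ dist s (e m) + dist s (g x) := dist_triangle_left _ _ _
        _ ≤ ρ + r := by linarith [mem_closedBall.mp hsg]
  obtain ⟨n, hn, hnS⟩ := exists_measurable_nat_forall_of_measurableSet hex fun m =>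
    (hS _ _ hr).inter (measurableSet_le (measurable_const.dist hg) measurable_const)
  exact ⟨e ∘ n, measurable_from_nat.comp hn, fun x => (hnS x).1, fun x => (hnS x).2⟩

/-- The Kuratowski–Ryll-Nardzewski selection theorem. -/
theorem exists_measurable_forall_mem_of_measurableSet_closedBall [CompleteSpace E] [BorelSpace E]
    (hS : ∀ q r, 0 < r → MeasurableSet {x | (S x ∩ closedBall q r).Nonempty})
    (hne : ∀ x, (S x).Nonempty) (hcl : ∀ x, IsClosed (S x)) :
    ∃ v : X → E, Measurable v ∧ ∀ x, v x ∈ S x := by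
  have hr : ∀ k : ℕ, (0 : ℝ) < (1 / 2) ^ k := fun k => by positivity
  obtain ⟨g₀, hg₀, hg₀S⟩ := exists_measurable_closedBall_inter_nonempty hS hne (hr 0)
  choose! next hnext hnextS hnext_dist using fun (k : ℕ) (g : X → E)
    (h : Measurable g ∧ ∀ x, (S x ∩ closedBall (g x) ((1 / 2) ^ k)).Nonempty) =>
    exists_measurable_closedBall_inter_nonempty_of_dist_le hS h.1 h.2 (hr (k + 1))
  let G : ℕ → X → E := fun k => Nat.rec g₀ next k
  have hG : ∀ k, Measurable (G k) ∧ ∀ x, (S x ∩ closedBall (G k x) ((1 / 2) ^ k)).Nonempty := by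
    intro k
    induction k with
    | zero => exact ⟨hg₀, hg₀S⟩
    | succ k ih => exact ⟨hnext k _ ih, hnextS k _ ih⟩
  have hcauchy : ∀ x, CauchySeq fun k => G k x := fun x =>
    cauchySeq_of_le_geometric (1 / 2) 2 (by norm_num) fun k => by
      rw [dist_comm]
      calc dist (G (k + 1) x) (G k x) ≤ (1 / 2) ^ k + (1 / 2) ^ (k + 1) := hnext_dist k _ (hG k) x
        _ ≤ 2 * (1 / 2) ^ k := by rw [pow_succ]; linarith [hr k]
  choose v hv using fun x => cauchySeq_tendsto_of_complete (hcauchy x)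
  refine ⟨v, measurable_of_tendsto_metrizable (fun k => (hG k).1) (tendsto_pi_nhds.2 hv),
    fun x => ?_⟩
  rw [← (hcl x).closure_eq, Metric.mem_closure_iff]
  intro ε hε
  have hsmall : ∀ᶠ k in atTop, (1 / 2 : ℝ) ^ k < ε / 2 :=
    (tendsto_pow_atTop_nhds_zero_of_lt_one (by norm_num) (by norm_num)).eventually
      (gt_mem_nhds (half_pos hε))
  have hclose : ∀ᶠ k in atTop, dist (G k x) (v x) < ε / 2 :=
    (hv x).eventually (ball_mem_nhds _ (half_pos hε))
  obtain ⟨k, hk, hkx⟩ := (hsmall.and hclose).exists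
  obtain ⟨s, hs, hsk⟩ := (hG k).2 x
  refine ⟨s, hs, ?_⟩
  calc dist (v x) s ≤ dist (G k x) (v x) + dist (G k x) s := dist_triangle_left _ _ _
    _ < ε := by linarith [mem_closedBall'.mp hsk]

end MeasurableSelection

section HittingSets

variable {X E : Type*}

theorem iInf_infEDist_add_eq_biInf [PseudoEMetricSpace E] {S : Set E} {g : E → ℝ≥0∞}
    (hg : ∀ y z, g y ≤ g z + edist y z) :
    ⨅ p, (infEDist p S + g p) = ⨅ y ∈ S, g y := by
  refine le_antisymm (le_iInf₂ fun y hy => ?_) (le_iInf fun p => ?_)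
  · calc ⨅ p, (infEDist p S + g p) ≤ infEDist y S + g y := iInf_le _ y
      _ = g y := by rw [infEDist_zero_of_mem hy, zero_add]
  · calc ⨅ y ∈ S, g y ≤ ⨅ y ∈ S, (edist p y + g p) :=
          iInf₂_mono fun y _ => (hg y p).trans_eq (by rw [add_comm, edist_comm])
      _ = infEDist p S + g p := by simp only [infEDist, ENNReal.iInf_add]

theorem IsCompact.exists_mem_eq_zero_iff_biInf_eq_zero [TopologicalSpace E] {S : Set E}
    (hS : IsCompact S) {g : E → ℝ≥0∞} (hg : Continuous g) :
    (∃ y ∈ S, g y = 0) ↔ ⨅ y ∈ S, g y = 0 := by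
  refine ⟨fun ⟨y, hy, hgy⟩ => le_antisymm ((iInf₂_le y hy).trans_eq hgy) bot_le, fun h => ?_⟩
  obtain rfl | hne := S.eq_empty_or_nonempty
  · simp at h
  obtain ⟨y, hy, hmin⟩ := hS.exists_isMinOn hne hg.continuousOn
  exact ⟨y, hy, le_antisymm (h ▸ le_iInf₂ fun z hz => hmin hz) bot_le⟩

theorem IsCompact.exists_mem_eq_zero_iff_iInf_infEDist_add [PseudoEMetricSpace E] {S D : Set E}
    (hS : IsCompact S) (hD : Dense D) {g : E → ℝ≥0∞} (hg : ∀ y z, g y ≤ g z + edist y z) :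
    (∃ y ∈ S, g y = 0) ↔ ⨅ p : D, (infEDist (p : E) S + g p) = 0 := by
  have hgc : Continuous g := continuous_of_le_add_edist 1 ENNReal.one_ne_top
    fun y z => by simpa using hg y z
  rw [hD.ciInf' (f := fun p => infEDist p S + g p) (continuous_infEDist.add hgc),
    iInf_infEDist_add_eq_biInf hg, hS.exists_mem_eq_zero_iff_biInf_eq_zero hgc]

variable [MeasurableSpace X]

theorem measurableSet_setOf_exists_mem_eq_zero [PseudoEMetricSpace E] [SeparableSpace E]
    {S : X → Set E} (hS : ∀ x, IsCompact (S x))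
    (hSm : ∀ p, Measurable fun x => infEDist p (S x)) {g : X → E → ℝ≥0∞}
    (hg : ∀ x y z, g x y ≤ g x z + edist y z) (hgm : ∀ p, Measurable fun x => g x p) :
    MeasurableSet {x | ∃ y ∈ S x, g x y = 0} := by
  obtain ⟨D, hDc, hD⟩ := exists_countable_dense E
  have := hDc.to_subtype
  simp_rw [(hS _).exists_mem_eq_zero_iff_iInf_infEDist_add hD (hg _)]
  exact measurableSet_eq_fun (Measurable.iInf fun p => (hSm p).add (hgm p)) measurable_const

theorem measurableSet_setOf_inter_inter_closedBall_nonempty [PseudoMetricSpace E]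
    [SeparableSpace E] {S T : X → Set E} (hS : ∀ x, IsCompact (S x)) (hT : ∀ x, IsClosed (T x))
    (hSm : ∀ p, Measurable fun x => infEDist p (S x))
    (hTm : ∀ p, Measurable fun x => infEDist p (T x)) (q : E) (r : ℝ) :
    MeasurableSet {x | (S x ∩ T x ∩ closedBall q r).Nonempty} := by
  have key := measurableSet_setOf_exists_mem_eq_zero hS hSm
    (g := fun x y => max (infEDist y (T x)) (infEDist y (closedBall q r)))
    (fun x y z => (max_le_max infEDist_le_infEDist_add_edist
      infEDist_le_infEDist_add_edist).trans_eq (max_add_add_right _ _ _))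
    (fun p => (hTm p).max measurable_const)
  convert key using 3 with x
  have hB : IsClosed (closedBall q r) := isClosed_closedBall
  simp only [max_eq_zero, ← mem_iff_infEDist_zero_of_closed (hT x),
    ← mem_iff_infEDist_zero_of_closed hB, Set.Nonempty, mem_inter_iff, and_assoc]

end HittingSets

theorem UpperHemicontinuousOn.lowerSemicontinuousOn_infEDist {Z E : Type*} [TopologicalSpace Z]
    [PseudoEMetricSpace E] {F : Z → Set E} {s : Set Z} (hF : UpperHemicontinuousOn F s) (p : E) :
    LowerSemicontinuousOn (fun z => infEDist p (F z)) s := by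
  intro z hz b hb
  obtain ⟨b', hbb', hb'⟩ := exists_between hb
  have hV : IsOpen {w | b' < edist p w} :=
    isOpen_lt continuous_const (continuous_const.edist continuous_id)
  filter_upwards [hF.forall_isOpen z hz _ hV fun w hw =>
    hb'.trans_le (infEDist_le_edist_of_mem hw)] with z' hz'
  exact hbb'.trans_le (le_infEDist.2 fun w hw => (hz' hw).le)

theorem upperHemicontinuousOn_of_forall_exists_norm_sub_lt {X Y E : Type*}
    [SeminormedAddCommGroup X] [SeminormedAddCommGroup Y] [TopologicalSpace E]
    {I : Set ℝ} {Ω : Set X} {K : Set Y} {φ : ℝ → X → Y → Set E}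
    (hφ : ∀ t₀ ∈ I, ∀ x₀ ∈ Ω, ∀ y₀ ∈ K, ∀ V : Set E, IsOpen V → φ t₀ x₀ y₀ ⊆ V →
      ∃ δ > (0:ℝ), ∀ t ∈ I, ∀ x ∈ Ω, ∀ y ∈ K,
        |t - t₀| < δ → ‖x - x₀‖ < δ → ‖y - y₀‖ < δ → φ t x y ⊆ V)
    {t : ℝ} (ht : t ∈ I) :
    UpperHemicontinuousOn (fun z : X × Y => φ t z.1 z.2) (Ω ×ˢ K) := by
  refine UpperHemicontinuousOn.of_forall_isOpen fun z₀ hz₀ V hV hφV => ?_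
  obtain ⟨δ, hδ, hδV⟩ := hφ t ht _ hz₀.1 _ hz₀.2 V hV hφV
  filter_upwards [self_mem_nhdsWithin, mem_nhdsWithin_of_mem_nhds (ball_mem_nhds z₀ hδ)]
    with z hz hzδ
  rw [mem_ball, Prod.dist_eq, max_lt_iff, dist_eq_norm, dist_eq_norm] at hzδ
  exact hδV t ht _ hz.1 _ hz.2 (by simpa using hδ) hzδ.1 hzδ.2

theorem measurable_infEDist_image_of_isSeparable {Y P E : Type*} [TopologicalSpace Y]
    [MeasurableSpace Y] [OpensMeasurableSpace Y] [TopologicalSpace P] [PseudoMetrizableSpace P]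
    [PseudoEMetricSpace E] {f : Y → P → E} (hf : Continuous (Function.uncurry f)) {D : Set P}
    (hD : IsSeparable D) (p : E) : Measurable fun y => infEDist p (f y '' D) := by
  obtain ⟨C, hCD, hCc, hDC⟩ := hD.exists_countable_dense_subset
  have key : ∀ y, infEDist p (f y '' D) = ⨅ c ∈ C, edist p (f y c) := fun y => by
    have hfy : Continuous (f y) := hf.comp (Continuous.prodMk_right y)
    refine le_antisymm ?_ ?_
    · simpa only [infEDist, iInf_image] using infEDist_anti (image_mono hCD) (x := p)
    · calc ⨅ c ∈ C, edist p (f y c) = infEDist p (closure (f y '' C)) := by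
            rw [infEDist_closure, infEDist, iInf_image]
        _ ≤ infEDist p (f y '' D) :=
            infEDist_anti ((image_mono hDC).trans (image_closure_subset_closure_image hfy))
  simp_rw [key]
  exact Measurable.biInf C hCc fun c _ =>
    (continuous_const.edist (hf.comp (continuous_id.prodMk continuous_const))).measurable

section TangentCone

variable {E : Type*} [NormedAddCommGroup E] [NormedSpace ℝ E]

/-- The closed cone generated by `K - y`; for convex `K` this is the tangent cone to `K` at `y`. -/
def tangentCone (K : Set E) (y : E) : Set E :=
  closure (⋃ h ∈ Ioi (0:ℝ), (fun k => h⁻¹ • (k - y)) '' K)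

theorem iUnion_inv_smul_sub_image_eq_image (K : Set E) (y : E) :
    ⋃ h ∈ Ioi (0:ℝ), (fun k => h⁻¹ • (k - y)) '' K =
      (fun z : ℝ × E => z.1 • (z.2 - y)) '' (Ioi 0 ×ˢ K) := by
  ext w
  simp only [mem_iUnion, mem_image, mem_Ioi, mem_prod, Prod.exists, exists_prop]
  constructor
  · rintro ⟨h, hh, k, hk, rfl⟩
    exact ⟨h⁻¹, k, ⟨inv_pos.2 hh, hk⟩, rfl⟩
  · rintro ⟨s, k, ⟨hs, hk⟩, rfl⟩
    exact ⟨s⁻¹, inv_pos.2 hs, k, hk, by rw [inv_inv]⟩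

theorem measurable_infEDist_tangentCone [SeparableSpace E] [MeasurableSpace E]
    [OpensMeasurableSpace E] (K : Set E) (p : E) :
    Measurable fun y => infEDist p (tangentCone K y) := by
  simp_rw [tangentCone, infEDist_closure, iUnion_inv_smul_sub_image_eq_image]
  exact measurable_infEDist_image_of_isSeparable (f := fun y (z : ℝ × E) => z.1 • (z.2 - y))
    (by fun_prop) (IsSeparable.of_separableSpace _) p

end TangentCone

theorem exists_measurable_forall_mem_inter {X E : Type*} [TopologicalSpace X] [MeasurableSpace X]
    [OpensMeasurableSpace X] [MetricSpace E] [CompleteSpace E] [SeparableSpace E] [Nonempty E]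
    [MeasurableSpace E] [BorelSpace E] {Ω : Set X} {K : Set E} (hΩ : MeasurableSet Ω)
    (hK : IsClosed K) {F : X → E → Set E}
    (hF : UpperHemicontinuousOn (fun z : X × E => F z.1 z.2) (Ω ×ˢ K))
    (hFc : ∀ x ∈ Ω, ∀ y ∈ K, IsCompact (F x y)) {T : E → Set E} (hT : ∀ y, IsClosed (T y))
    (hTm : ∀ p, Measurable fun y => infEDist p (T y))
    (hFT : ∀ x ∈ Ω, ∀ y ∈ K, (F x y ∩ T y).Nonempty) {u : X → E} (hu : Measurable u) :
    ∃ v : X → E, Measurable v ∧ ∀ x ∈ Ω, u x ∈ K → v x ∈ F x (u x) ∩ T (u x) := by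
  set A := Ω ∩ u ⁻¹' K
  have hA : MeasurableSet A := hΩ.inter (hu hK.measurableSet)
  let ζ : A → ↥(Ω ×ˢ K) := fun a => ⟨(a, u a), a.2.1, a.2.2⟩
  have hζ : Measurable ζ :=
    (measurable_subtype_coe.prodMk (hu.comp measurable_subtype_coe)).subtype_mk
  have hFm : ∀ p, Measurable fun a : A => infEDist p (F a (u a)) := fun p =>
    (lowerSemicontinuous_restrict_iff.2 (hF.lowerSemicontinuousOn_infEDist p)).measurable.comp hζ
  have hTm' : ∀ p, Measurable fun a : A => infEDist p (T (u a)) := fun p =>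
    (hTm p).comp (hu.comp measurable_subtype_coe)
  obtain ⟨w, hw, hwS⟩ := exists_measurable_forall_mem_of_measurableSet_closedBall
    (S := fun a : A => F a (u a) ∩ T (u a))
    (fun q r _ => measurableSet_setOf_inter_inter_closedBall_nonempty
      (fun a => hFc _ a.2.1 _ a.2.2) (fun a => hT _) hFm hTm' q r)
    (fun a => hFT _ a.2.1 _ a.2.2) (fun a => (hFc _ a.2.1 _ a.2.2).isClosed.inter (hT _))
  classical
  refine ⟨fun x => if h : x ∈ A then w ⟨x, h⟩ else u x,
    hw.dite (hu.comp measurable_subtype_coe) hA, fun x hx hux => ?_⟩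
  simpa only [dif_pos (show x ∈ A from ⟨hx, hux⟩)] using hwS ⟨x, hx, hux⟩

theorem tangent_square_integrable_selection_general
    {M N : ℕ}
    (Ω : Set (EuclideanSpace ℝ (Fin M))) (hΩopen : IsOpen Ω)
    (K : Set (EuclideanSpace ℝ (Fin N))) (hKcl : IsClosed K)
    (φ : ℝ → EuclideanSpace ℝ (Fin M) → EuclideanSpace ℝ (Fin N) →
      Set (EuclideanSpace ℝ (Fin N)))
    (hφcpt : ∀ t ∈ Set.Icc (0:ℝ) 1, ∀ x ∈ Ω, ∀ y ∈ K, IsCompact (φ t x y))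
    (hφusc : ∀ t₀ ∈ Set.Icc (0:ℝ) 1, ∀ x₀ ∈ Ω, ∀ y₀ ∈ K,
      ∀ V : Set (EuclideanSpace ℝ (Fin N)), IsOpen V → φ t₀ x₀ y₀ ⊆ V →
        ∃ δ > (0:ℝ), ∀ t ∈ Set.Icc (0:ℝ) 1, ∀ x ∈ Ω, ∀ y ∈ K,
          |t - t₀| < δ → ‖x - x₀‖ < δ → ‖y - y₀‖ < δ → φ t x y ⊆ V)
    (α : EuclideanSpace ℝ (Fin M) → ℝ)
    (hα : MemLp α 2 (volume.restrict Ω)) (c : ℝ)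
    (hgrowth : ∀ t ∈ Set.Icc (0:ℝ) 1, ∀ x ∈ Ω, ∀ y ∈ K, ∀ v ∈ φ t x y,
      ‖v‖ ≤ α x + c * ‖y‖)
    -- tangency of φ to K
    (hφtan : ∀ t ∈ Set.Icc (0:ℝ) 1, ∀ x ∈ Ω, ∀ y ∈ K,
      (φ t x y ∩
        closure (⋃ h ∈ Set.Ioi (0:ℝ), (fun k => h⁻¹ • (k - y)) '' K)).Nonempty) :
    ∀ t ∈ Set.Icc (0:ℝ) 1,
      ∀ u : EuclideanSpace ℝ (Fin M) → EuclideanSpace ℝ (Fin N),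
        MemLp u 2 (volume.restrict Ω) →
        (∀ᵐ x ∂(volume.restrict Ω), u x ∈ K) →
        ∃ v : EuclideanSpace ℝ (Fin M) → EuclideanSpace ℝ (Fin N),
          Measurable v ∧ MemLp v 2 (volume.restrict Ω) ∧
          ∀ᵐ x ∂(volume.restrict Ω), v x ∈ φ t x (u x) ∩
            closure (⋃ h ∈ Set.Ioi (0:ℝ), (fun k => h⁻¹ • (k - u x)) '' K) := by
  intro t ht u hu huK
  obtain ⟨v, hv, hvmem⟩ := exists_measurable_forall_mem_inter hΩopen.measurableSet hKcl
    (upperHemicontinuousOn_of_forall_exists_norm_sub_lt hφusc ht) (hφcpt t ht)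
    (fun y => isClosed_closure) (measurable_infEDist_tangentCone K) (hφtan t ht)
    hu.1.stronglyMeasurable_mk.measurable
  have hΩ : ∀ᵐ x ∂(volume.restrict Ω), x ∈ Ω := ae_restrict_mem hΩopen.measurableSet
  have hvsel : ∀ᵐ x ∂(volume.restrict Ω), v x ∈ φ t x (u x) ∩ tangentCone K (u x) := by
    filter_upwards [hΩ, huK, hu.1.ae_eq_mk] with x hx hux hu'x
    rw [hu'x] at hux ⊢
    exact hvmem x hx hux
  refine ⟨v, hv, (hα.add (hu.norm.const_mul c)).of_le hv.aestronglyMeasurable ?_, hvsel⟩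
  filter_upwards [hΩ, huK, hvsel] with x hx hux hvx
  exact (hgrowth t ht x hx _ hux _ hvx.1).trans (le_abs_self _)

/-- Let `Ω ⊆ ℝ^M` be nonempty bounded open, `K ⊆ ℝ^N` nonempty closed
convex, and `φ` usc with convex compact values, with growth `|v| ≤ α(x) + c|y|`
(`α ∈ L²(Ω)`), and tangent to `K`: `φ(t,x,y) ∩ T_K(y) ≠ ∅`.  Then for every `t ∈ [0,1]` and
every `u ∈ L²(Ω,ℝ^N)` with `u(x) ∈ K` a.e. there exists a measurable square-integrable
selection `v` with `v(x) ∈ φ(t,x,u(x)) ∩ T_K(u(x))` a.e. on `Ω`. -/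
theorem tangent_square_integrable_selection
    {M N : ℕ}
    (Ω : Set (EuclideanSpace ℝ (Fin M))) (hΩne : Ω.Nonempty)
    (hΩbdd : Bornology.IsBounded Ω) (hΩopen : IsOpen Ω)
    (K : Set (EuclideanSpace ℝ (Fin N))) (hKne : K.Nonempty)
    (hKcl : IsClosed K) (hKconv : Convex ℝ K)
    (φ : ℝ → EuclideanSpace ℝ (Fin M) → EuclideanSpace ℝ (Fin N) →
      Set (EuclideanSpace ℝ (Fin N)))
    (hφne : ∀ t ∈ Set.Icc (0:ℝ) 1, ∀ x ∈ Ω, ∀ y ∈ K, (φ t x y).Nonempty)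
    (hφconv : ∀ t ∈ Set.Icc (0:ℝ) 1, ∀ x ∈ Ω, ∀ y ∈ K, Convex ℝ (φ t x y))
    (hφcpt : ∀ t ∈ Set.Icc (0:ℝ) 1, ∀ x ∈ Ω, ∀ y ∈ K, IsCompact (φ t x y))
    (hφusc : ∀ t₀ ∈ Set.Icc (0:ℝ) 1, ∀ x₀ ∈ Ω, ∀ y₀ ∈ K,
      ∀ V : Set (EuclideanSpace ℝ (Fin N)), IsOpen V → φ t₀ x₀ y₀ ⊆ V →
        ∃ δ > (0:ℝ), ∀ t ∈ Set.Icc (0:ℝ) 1, ∀ x ∈ Ω, ∀ y ∈ K,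
          |t - t₀| < δ → ‖x - x₀‖ < δ → ‖y - y₀‖ < δ → φ t x y ⊆ V)
    (α : EuclideanSpace ℝ (Fin M) → ℝ)
    (hα : MemLp α 2 (volume.restrict Ω)) (c : ℝ) (hc : 0 < c)
    (hgrowth : ∀ t ∈ Set.Icc (0:ℝ) 1, ∀ x ∈ Ω, ∀ y ∈ K, ∀ v ∈ φ t x y,
      ‖v‖ ≤ α x + c * ‖y‖)
    -- tangency of φ to K
    (hφtan : ∀ t ∈ Set.Icc (0:ℝ) 1, ∀ x ∈ Ω, ∀ y ∈ K,
      (φ t x y ∩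
        closure (⋃ h ∈ Set.Ioi (0:ℝ), (fun k => h⁻¹ • (k - y)) '' K)).Nonempty) :
    ∀ t ∈ Set.Icc (0:ℝ) 1,
      ∀ u : EuclideanSpace ℝ (Fin M) → EuclideanSpace ℝ (Fin N),
        MemLp u 2 (volume.restrict Ω) →
        (∀ᵐ x ∂(volume.restrict Ω), u x ∈ K) →
        ∃ v : EuclideanSpace ℝ (Fin M) → EuclideanSpace ℝ (Fin N),
          Measurable v ∧ MemLp v 2 (volume.restrict Ω) ∧
          ∀ᵐ x ∂(volume.restrict Ω), v x ∈ φ t x (u x) ∩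
            closure (⋃ h ∈ Set.Ioi (0:ℝ), (fun k => h⁻¹ • (k - u x)) '' K) :=
  tangent_square_integrable_selection_general Ω hΩopen K hKcl φ hφcpt hφusc α hα c hgrowth hφtan
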